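/- arXiv:1508.04351 — 2 statements merged into one kernel-verified Lean document; each statement's English description precedes it below -/
import Mathlib

section
/- Let S be a nonnegative integrable random variable on a probability space with m := 1 − E[S] satisfying 0 < m < 1, fix T > 0 and let α ∈ [0,1). Then there exists x*(α) ≤ 0 with log((1−α)·m) < x*(α) ≤ log(1 − α·m) such that: for every x ≥ x*(α) there exists σ ∈ [0,∞) with C_BS(x,σ) = E[(S − e^x)₊] + α·m, while for every x < x*(α) no such σ ∈ [0,∞) exists. In other words, the implied volatility of the α-collateralised Call is well defined exactly on [x*(α), +∞). -/
open MeasureTheory Filter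

/-- Standard normal cumulative distribution function. -/
noncomputable def stdNormalCDF (y : ℝ) : ℝ :=
  ∫ t in Set.Iic y, Real.exp (-t ^ 2 / 2) / Real.sqrt (2 * Real.pi)

/-- Black-Scholes d₊ (maturity `T`, log-strike `x`, volatility `σ`). -/
noncomputable def dplus (T x σ : ℝ) : ℝ := -x / (σ * Real.sqrt T) + σ * Real.sqrt T / 2

/-- Black-Scholes d₋ (maturity `T`, log-strike `x`, volatility `σ`). -/
noncomputable def dminus (T x σ : ℝ) : ℝ := -x / (σ * Real.sqrt T) - σ * Real.sqrt T / 2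

/-- Black-Scholes Call price (maturity `T`, log-strike `x`, volatility `σ`),
with the convention `CBS T x 0 = max (1 - exp x) 0`. -/
noncomputable def CBS (T x σ : ℝ) : ℝ :=
  if σ = 0 then max (1 - Real.exp x) 0
  else stdNormalCDF (dplus T x σ) - Real.exp x * stdNormalCDF (dminus T x σ)

/-- Black-Scholes Put price (maturity `T`, log-strike `x`, volatility `σ`),
with the convention `PBS T x 0 = max (exp x - 1) 0`. -/
noncomputable def PBS (T x σ : ℝ) : ℝ :=
  if σ = 0 then max (Real.exp x - 1) 0
  else Real.exp x * stdNormalCDF (-dminus T x σ) - stdNormalCDF (-dplus T x σ)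

/-! Put `k = e^x`. Since `E[(S - k)₊] + k = E[max (S, k)]`, the collateralised price `C(x)` lies
in `[0, 1)` and is at least the intrinsic value `1 - e^x` exactly when
`E[max (S, e^x)] ≥ 1 - α m`. The left-hand side is continuous and nondecreasing in `x`, at least
`e^x`, and strictly below `E[S] + e^x = 1 - m + e^x`, so these `x` form a closed half-line
`[x*, ∞)` with `log ((1 - α) m) < x* ≤ log (1 - α m)`.

On the Black–Scholes side, `σ ↦ C_BS(x, σ)` is continuous on `[0, ∞)`, starts at `(1 - e^x)₊`,
tends to `1`, and never drops below `1 - e^x`, because `φ(t + σ√T) ≤ e^x φ(t)` for `t ≥ d₋`.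
By the intermediate value theorem a price `C ∈ [0, 1)` therefore has an implied volatility
if and only if `C ≥ 1 - e^x`. -/

open ProbabilityTheory Set Topology

lemma setIntegral_Ioi_comp_add_right (f : ℝ → ℝ) (a s : ℝ) :
    ∫ t in Ioi a, f (t + s) = ∫ t in Ioi (a + s), f t := by
  have h := (measurePreserving_add_right volume s).setIntegral_preimage_emb
    (measurableEmbedding_addRight s) f (Ioi (a + s))
  rwa [preimage_add_const_Ioi, add_sub_cancel_right] at h

lemma gaussianPDFReal_zero_one_add (t s : ℝ) :
    gaussianPDFReal 0 1 (t + s) = gaussianPDFReal 0 1 t * Real.exp (-(t * s) - s ^ 2 / 2) := by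
  simp only [gaussianPDFReal_def, mul_assoc, ← Real.exp_add]
  congr 2
  push_cast
  ring

section NormalCDF

lemma stdNormalCDF_eq_setIntegral_gaussianPDFReal (y : ℝ) :
    stdNormalCDF y = ∫ t in Iic y, gaussianPDFReal 0 1 t := by
  simp [stdNormalCDF, gaussianPDFReal_def, div_eq_inv_mul]

lemma stdNormalCDF_eq_cdf : stdNormalCDF = cdf (gaussianReal 0 1) := by
  ext y
  rw [cdf_eq_real, measureReal_def, gaussianReal_apply_eq_integral _ one_ne_zero,
    ENNReal.toReal_ofReal (setIntegral_nonneg measurableSet_Iic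
      fun t _ => gaussianPDFReal_nonneg 0 1 t), stdNormalCDF_eq_setIntegral_gaussianPDFReal]

@[fun_prop]
lemma continuous_stdNormalCDF : Continuous stdNormalCDF := by
  refine continuous_iff_continuousAt.2 fun y => ?_
  have h := (integrable_gaussianPDFReal 0 1).integrableOn.continuousOn_Iic_primitive_Iic
    (a₀ := y + 1)
  simp_rw [← stdNormalCDF_eq_setIntegral_gaussianPDFReal] at h
  exact h.continuousAt (Iic_mem_nhds (by linarith))

lemma tendsto_stdNormalCDF_atTop : Tendsto stdNormalCDF atTop (𝓝 1) :=
  stdNormalCDF_eq_cdf ▸ tendsto_cdf_atTop _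

lemma tendsto_stdNormalCDF_atBot : Tendsto stdNormalCDF atBot (𝓝 0) :=
  stdNormalCDF_eq_cdf ▸ tendsto_cdf_atBot _

lemma one_sub_stdNormalCDF (y : ℝ) :
    1 - stdNormalCDF y = ∫ t in Ioi y, gaussianPDFReal 0 1 t := by
  rw [stdNormalCDF_eq_setIntegral_gaussianPDFReal, ← integral_gaussianPDFReal_eq_one 0 one_ne_zero,
    ← intervalIntegral.integral_Iic_add_Ioi (integrable_gaussianPDFReal 0 1).integrableOn
      (integrable_gaussianPDFReal 0 1).integrableOn]
  ring

end NormalCDF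

section BlackScholes

variable (T x : ℝ)

lemma CBS_zero : CBS T x 0 = max (1 - Real.exp x) 0 := if_pos rfl

lemma CBS_eqOn_Ioi :
    EqOn (CBS T x) (fun σ => stdNormalCDF (dplus T x σ) - Real.exp x * stdNormalCDF (dminus T x σ))
      (Ioi 0) :=
  fun _ hσ => if_neg (ne_of_gt hσ)

lemma one_sub_exp_le_CBS {σ : ℝ} (hT : 0 < T) (hσ : 0 ≤ σ) : 1 - Real.exp x ≤ CBS T x σ := by
  rcases hσ.eq_or_lt with rfl | hσ
  · exact CBS_zero T x ▸ le_max_left _ _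
  set s := σ * √T
  set d := dminus T x σ
  have hs : 0 < s := by positivity
  have hdplus : dplus T x σ = d + s := by simp only [d, dplus, dminus]; ring
  have hx : x = -(d * s) - s ^ 2 / 2 := by simp only [d, dminus]; field_simp; ring
  have hdensity :
      ∀ t ∈ Ioi d, gaussianPDFReal 0 1 (t + s) ≤ Real.exp x * gaussianPDFReal 0 1 t := by
    intro t ht
    rw [gaussianPDFReal_zero_one_add, mul_comm (Real.exp x)]
    gcongr
    · exact gaussianPDFReal_nonneg 0 1 t
    · rw [hx]; nlinarith [mem_Ioi.1 ht]
  have htail : 1 - stdNormalCDF (d + s) ≤ Real.exp x * (1 - stdNormalCDF d) := by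
    rw [one_sub_stdNormalCDF, one_sub_stdNormalCDF, ← setIntegral_Ioi_comp_add_right,
      ← integral_const_mul]
    exact setIntegral_mono_on ((integrable_gaussianPDFReal 0 1).comp_add_right s).integrableOn
      ((integrable_gaussianPDFReal 0 1).integrableOn.const_mul _) measurableSet_Ioi hdensity
  rw [CBS_eqOn_Ioi T x hσ]
  show 1 - Real.exp x ≤ stdNormalCDF (dplus T x σ) - Real.exp x * stdNormalCDF d
  rw [hdplus]
  linarith

lemma tendsto_CBS_atTop (hT : 0 < T) : Tendsto (CBS T x) atTop (𝓝 1) := by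
  have hs : Tendsto (fun σ : ℝ => σ * √T) atTop atTop :=
    tendsto_id.atTop_mul_const (Real.sqrt_pos.2 hT)
  have hx : Tendsto (fun σ : ℝ => -x / (σ * √T)) atTop (𝓝 0) := tendsto_const_nhds.div_atTop hs
  have hdplus : Tendsto (dplus T x) atTop atTop := hx.add_atTop (hs.atTop_div_const two_pos)
  have hdminus : Tendsto (dminus T x) atTop atBot :=
    (hx.add_atBot (tendsto_neg_atTop_atBot.comp (hs.atTop_div_const two_pos))).congr
      fun σ => (sub_eq_add_neg _ _).symm
  have h := (tendsto_stdNormalCDF_atTop.comp hdplus).sub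
    ((tendsto_stdNormalCDF_atBot.comp hdminus).const_mul (Real.exp x))
  rw [mul_zero, sub_zero] at h
  exact h.congr' ((CBS_eqOn_Ioi T x).eventuallyEq_of_mem (Ioi_mem_atTop 0)).symm

lemma tendsto_CBS_nhdsGT_zero (hT : 0 < T) :
    Tendsto (CBS T x) (𝓝[>] 0) (𝓝 (max (1 - Real.exp x) 0)) := by
  have hinv : Tendsto (fun σ : ℝ => (σ * √T)⁻¹) (𝓝[>] 0) atTop := by
    simpa only [mul_inv] using
      tendsto_inv_nhdsGT_zero.atTop_mul_const (inv_pos.2 (Real.sqrt_pos.2 hT))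
  have hhalf : Tendsto (fun σ : ℝ => σ * √T / 2) (𝓝[>] 0) (𝓝 0) :=
    (((continuous_id.mul continuous_const).div_const 2).tendsto' 0 0 (by simp)).mono_left
      nhdsWithin_le_nhds
  have hhalf' : Tendsto (fun σ : ℝ => -(σ * √T / 2)) (𝓝[>] 0) (𝓝 0) := by
    simpa only [neg_zero] using hhalf.neg
  have hdplus : dplus T x = fun σ => -x * (σ * √T)⁻¹ + σ * √T / 2 := by
    ext σ; rw [dplus, div_eq_mul_inv]
  have hdminus : dminus T x = fun σ => -x * (σ * √T)⁻¹ + -(σ * √T / 2) := by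
    ext σ; rw [dminus, div_eq_mul_inv, sub_eq_add_neg]
  refine Tendsto.congr' ((CBS_eqOn_Ioi T x).eventuallyEq_of_mem self_mem_nhdsWithin).symm ?_
  rcases lt_trichotomy x 0 with hx | rfl | hx
  · have h := hinv.const_mul_atTop (neg_pos.2 hx)
    have h' := (tendsto_stdNormalCDF_atTop.comp (hdplus ▸ h.atTop_add hhalf)).sub
      ((tendsto_stdNormalCDF_atTop.comp (hdminus ▸ h.atTop_add hhalf')).const_mul (Real.exp x))
    rw [mul_one] at h'
    rwa [max_eq_left (by simpa using hx.le)]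
  · have h := (continuous_stdNormalCDF.tendsto 0).comp hhalf
    have h' := (continuous_stdNormalCDF.tendsto 0).comp hhalf'
    simp only [hdplus, hdminus, neg_zero, zero_mul, zero_add, Real.exp_zero, one_mul]
    simpa using h.sub h'
  · have h := hinv.const_mul_atTop_of_neg (neg_lt_zero.2 hx)
    have h' := (tendsto_stdNormalCDF_atBot.comp (hdplus ▸ h.atBot_add hhalf)).sub
      ((tendsto_stdNormalCDF_atBot.comp (hdminus ▸ h.atBot_add hhalf')).const_mul (Real.exp x))
    rw [mul_zero, sub_zero] at h'
    rwa [max_eq_right (by simpa using hx.le)]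

lemma continuousOn_CBS (hT : 0 < T) : ContinuousOn (CBS T x) (Ici 0) := by
  intro σ hσ
  rcases (mem_Ici.1 hσ).eq_or_lt with rfl | hσ
  · refine continuousWithinAt_Ioi_iff_Ici.1 ?_
    rw [ContinuousWithinAt, CBS_zero]
    exact tendsto_CBS_nhdsGT_zero T x hT
  · refine ContinuousAt.continuousWithinAt (ContinuousAt.congr ?_
      ((CBS_eqOn_Ioi T x).eventuallyEq_of_mem (Ioi_mem_nhds hσ)).symm)
    have : σ * √T ≠ 0 := by positivity
    unfold dplus dminus
    fun_prop (disch := exact this)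

lemma exists_CBS_eq_iff {C : ℝ} (hT : 0 < T) (hC₀ : 0 ≤ C) (hC₁ : C < 1) :
    (∃ σ, 0 ≤ σ ∧ CBS T x σ = C) ↔ 1 - Real.exp x ≤ C := by
  refine ⟨fun ⟨σ, hσ, hC⟩ => hC ▸ one_sub_exp_le_CBS T x hT hσ, fun hx => ?_⟩
  obtain ⟨σ₁, hσ₁, hCσ₁⟩ :=
    (((tendsto_CBS_atTop T x hT).eventually (eventually_gt_nhds hC₁)).and
      (eventually_ge_atTop 0)).exists.imp fun _ h => h.symm
  have hCσ₀ : CBS T x 0 ≤ C := CBS_zero T x ▸ max_le hx hC₀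
  obtain ⟨σ, hσ, hσC⟩ := intermediate_value_Icc hσ₁
    ((continuousOn_CBS T x hT).mono Icc_subset_Ici_self) ⟨hCσ₀, hCσ₁.le⟩
  exact ⟨σ, hσ.1, hσC⟩

end BlackScholes

section IntegralMax

variable {Ω : Type*} [MeasurableSpace Ω] {μ : Measure Ω} {S : Ω → ℝ}

lemma integrable_max_const [IsFiniteMeasure μ] (hS : Integrable S μ) (k : ℝ) :
    Integrable (fun ω => max (S ω) k) μ :=
  hS.sup (integrable_const k)

lemma integral_max_sub_zero_add [IsProbabilityMeasure μ] (hS : Integrable S μ) (k : ℝ) :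
    ∫ ω, max (S ω - k) 0 ∂μ + k = ∫ ω, max (S ω) k ∂μ := by
  have h : ∀ ω, max (S ω) k = max (S ω - k) 0 + k := fun ω => by
    rw [← max_add_add_right, sub_add_cancel, zero_add]
  simp only [h]
  have hint : Integrable (fun ω => max (S ω - k) 0) μ :=
    integrable_max_const (S := fun ω => S ω - k) (hS.sub (integrable_const k)) 0
  rw [integral_add hint (integrable_const k), integral_const, probReal_univ, one_smul]

lemma monotone_integral_max [IsFiniteMeasure μ] (hS : Integrable S μ) :
    Monotone fun k => ∫ ω, max (S ω) k ∂μ := fun _ _ hab =>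
  integral_mono (integrable_max_const hS _) (integrable_max_const hS _)
    fun _ => max_le_max le_rfl hab

lemma continuous_integral_max [IsFiniteMeasure μ] (hS : Integrable S μ) :
    Continuous fun k => ∫ ω, max (S ω) k ∂μ := by
  refine (LipschitzWith.of_dist_le_mul fun a b => ?_).continuous (K := (μ.real univ).toNNReal)
  rw [Real.dist_eq, Real.dist_eq,
    ← integral_sub (integrable_max_const hS a) (integrable_max_const hS b),
    Real.coe_toNNReal _ measureReal_nonneg, mul_comm]
  have hpointwise : ∀ ω, ‖max (S ω) a - max (S ω) b‖ ≤ |a - b| := fun ω => by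
    rw [Real.norm_eq_abs, max_comm (S ω), max_comm (S ω)]
    exact abs_max_sub_max_le_abs a b (S ω)
  exact norm_integral_le_of_norm_le_const (Eventually.of_forall hpointwise)

lemma le_integral_max [IsProbabilityMeasure μ] (hS : Integrable S μ) (k : ℝ) :
    k ≤ ∫ ω, max (S ω) k ∂μ := by
  simpa using integral_mono (integrable_const k) (integrable_max_const hS k)
    fun ω => le_max_right (S ω) k

lemma integral_max_lt_integral_add [IsProbabilityMeasure μ] (hS : Integrable S μ) (hS₀ : 0 ≤ S)
    (hpos : 0 < ∫ ω, S ω ∂μ) {k : ℝ} (hk : 0 < k) :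
    ∫ ω, max (S ω) k ∂μ < ∫ ω, S ω ∂μ + k := by
  have hmin : Integrable (fun ω => min (S ω) k) μ := hS.inf (integrable_const k)
  have hsupport : Function.support (fun ω => min (S ω) k) = Function.support S := by
    ext ω
    have := hS₀ ω
    simp only [Function.mem_support, ne_eq]
    grind
  have hmin_pos : 0 < ∫ ω, min (S ω) k ∂μ := by
    rw [integral_pos_iff_support_of_nonneg (fun ω => le_min (hS₀ ω) hk.le) hmin, hsupport,
      ← integral_pos_iff_support_of_nonneg hS₀ hS]
    exact hpos
  have hsum : ∫ ω, max (S ω) k ∂μ + ∫ ω, min (S ω) k ∂μ = ∫ ω, S ω ∂μ + k := by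
    rw [← integral_add (integrable_max_const hS k) hmin]
    simp only [max_add_min]
    rw [integral_add hS (integrable_const k), integral_const, probReal_univ, one_smul]
  linarith

end IntegralMax

lemma Monotone.exists_mem_Ioc_forall_le_apply_iff {f : ℝ → ℝ} (hmono : Monotone f)
    (hcont : Continuous f) {a b c : ℝ} (ha : f a < c) (hb : c ≤ f b) :
    ∃ x₀ ∈ Ioc a b, ∀ x, c ≤ f x ↔ x₀ ≤ x := by
  set A := {x | c ≤ f x}
  have ha_lt : ∀ x ∈ A, a < x := fun x hx =>
    lt_of_not_ge fun hxa => (hmono hxa).not_gt (ha.trans_le hx)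
  have hbdd : BddBelow A := ⟨a, fun x hx => (ha_lt x hx).le⟩
  have hmem : sInf A ∈ A := (isClosed_le continuous_const hcont).csInf_mem ⟨b, hb⟩ hbdd
  exact ⟨sInf A, ⟨ha_lt _ hmem, csInf_le hbdd hb⟩,
    fun x => ⟨fun hx => csInf_le hbdd hx, fun hx => hmem.trans (hmono hx)⟩⟩

/-- existence region of the implied volatility of the `α`-collateralised
Call, for `α ∈ [0,1)` and a strictly positive martingale defect `m`. -/
theorem alpha_collateralised_call_iv_existence_region
    {Ω : Type*} [MeasurableSpace Ω] (μ : Measure Ω) [IsProbabilityMeasure μ]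
    (S : Ω → ℝ) (hS : ∀ ω, 0 ≤ S ω) (hSint : Integrable S μ)
    (m : ℝ) (hm : m = 1 - ∫ ω, S ω ∂μ) (hm0 : 0 < m) (hm1 : m < 1)
    (T : ℝ) (hT : 0 < T) (α : ℝ) (hα : α ∈ Set.Ico (0:ℝ) 1) :
    ∃ xs : ℝ, xs ≤ 0 ∧
      Real.log ((1 - α) * m) < xs ∧ xs ≤ Real.log (1 - α * m) ∧
      (∀ x : ℝ, xs ≤ x →
        ∃ σ : ℝ, 0 ≤ σ ∧ CBS T x σ = (∫ ω, max (S ω - Real.exp x) 0 ∂μ) + α * m) ∧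
      (∀ x : ℝ, x < xs →
        ¬ ∃ σ : ℝ, 0 ≤ σ ∧ CBS T x σ = (∫ ω, max (S ω - Real.exp x) 0 ∂μ) + α * m) := by
  obtain ⟨hα0, hα1⟩ := hα
  have hES : 0 < ∫ ω, S ω ∂μ := by linarith
  have hlow : 0 < (1 - α) * m := mul_pos (by linarith) hm0
  have hup : 0 < 1 - α * m := by nlinarith
  obtain ⟨xs, ⟨hlow_lt, hle_up⟩, hxs⟩ := Monotone.exists_mem_Ioc_forall_le_apply_iff
    ((monotone_integral_max hSint).comp Real.exp_monotone)
    ((continuous_integral_max hSint).comp Real.continuous_exp)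
    (a := Real.log ((1 - α) * m)) (b := Real.log (1 - α * m)) (c := 1 - α * m)
    (by
      have := integral_max_lt_integral_add hSint hS hES hlow
      simp only [Function.comp_apply, Real.exp_log hlow]
      linarith)
    (by simpa [Real.exp_log hup] using le_integral_max hSint (1 - α * m))
  have hiv : ∀ x, (∃ σ, 0 ≤ σ ∧ CBS T x σ = (∫ ω, max (S ω - Real.exp x) 0 ∂μ) + α * m) ↔
      xs ≤ x := by
    intro x
    have hcall := integral_max_sub_zero_add hSint (Real.exp x)
    have hbound := integral_max_lt_integral_add hSint hS hES (Real.exp_pos x)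
    have hnonneg : 0 ≤ ∫ ω, max (S ω - Real.exp x) 0 ∂μ :=
      integral_nonneg fun ω => le_max_right _ _
    rw [exists_CBS_eq_iff T x hT (by positivity) (by nlinarith), ← hxs x, Function.comp_apply]
    constructor <;> intro h <;> linarith
  exact ⟨xs, hle_up.trans (Real.log_nonpos hup.le (by nlinarith)), hlow_lt, hle_up,
    fun x hx => (hiv x).2 hx, fun x hx h => hx.not_ge ((hiv x).1 h)⟩
end

section
/- Let S be a strictly positive (a.s.) integrable random variable on a probability space with m := 1 − E[S] ∈ (0,1), fix T > 0, and let n be the unique real number with N(n) = m. Set G(x) := E[S·1_{S ≥ e^x}] and assume √x·G(x) → 0 as x → ∞. Let I : ℝ → [0,∞) satisfy P_BS(x, I(x)) = E[(e^x − S)₊] for all x ∈ ℝ, and define Ψ(x) := √(2Tx)·e^{−n²/2}·( I(x) − √(2x/T) − n/√T − n²/(2√(2Tx)) ) for x > 0. Then 0 ≤ limsup_{x→∞} Ψ(x) ≤ 1; equivalently, I(x) = √(2x/T) + n/√T + n²/(2√(2Tx)) + (e^{n²/2}/√(2Tx))·Ψ(x) with 0 ≤ limsup_{x→∞} Ψ(x)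 ≤ 1. -/
open MeasureTheory Filter

/-!
Put–call parity, in the model and in Black–Scholes, turns the equation defining `I` into
`N(d₊) = N(n) + C(x) + eˣ N(-y)` with `y = -d₋`, where the call price `C(x) = E[(S - eˣ)⁺]` is at
most `G(x)`. Since `y² = d₊² + 2x`, we have `eˣ φ(y) = φ(d₊)`, and the Mills-ratio bounds
`φ(y) (1/y - 1/y³) ≤ N(-y) ≤ φ(y)/y` give `√(2x) eˣ N(-y) → φ(n)` as `y ~ √(2x)`. Hence `d₊ → n`
and, dividing by the difference quotient of `N` at `n`, `√(2x) (d₊ - n) → 1`. Finally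
`I √T = d₊ + y` and `√(2x) (y - √(2x)) = d₊² / (y/√(2x) + 1) → n²/2`, so `Ψ` converges to
`exp (-n²/2) ∈ (0, 1]`.
-/

open MeasureTheory Filter Set Real Topology

noncomputable def stdNormalPDF (t : ℝ) : ℝ := exp (-t ^ 2 / 2) / √(2 * π)

lemma stdNormalPDF_pos (t : ℝ) : 0 < stdNormalPDF t := by
  unfold stdNormalPDF; positivity

lemma stdNormalPDF_le_one (t : ℝ) : stdNormalPDF t ≤ 1 := by
  have hexp : exp (-t ^ 2 / 2) ≤ 1 := exp_le_one_iff.2 (by nlinarith [sq_nonneg t])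
  have hsqrt : 1 ≤ √(2 * π) := one_le_sqrt.2 (by linarith [pi_gt_three])
  exact div_le_one_of_le₀ (hexp.trans hsqrt) (sqrt_nonneg _)

lemma stdNormalPDF_neg (t : ℝ) : stdNormalPDF (-t) = stdNormalPDF t := by
  simp [stdNormalPDF]

@[fun_prop]
lemma continuous_stdNormalPDF : Continuous stdNormalPDF := by
  unfold stdNormalPDF; fun_prop

lemma stdNormalPDF_eq_exp_neg_mul_sq (t : ℝ) :
    stdNormalPDF t = exp (-(1 / 2) * t ^ 2) / √(2 * π) := by
  unfold stdNormalPDF; ring_nf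

lemma integrable_stdNormalPDF : Integrable stdNormalPDF := by
  rw [funext stdNormalPDF_eq_exp_neg_mul_sq]
  exact (integrable_exp_neg_mul_sq (by norm_num : (0 : ℝ) < 1 / 2)).div_const (√(2 * π))

lemma integral_stdNormalPDF : ∫ t, stdNormalPDF t = 1 := by
  simp_rw [stdNormalPDF_eq_exp_neg_mul_sq]
  rw [integral_div, integral_gaussian, div_eq_one_iff_eq (by positivity)]
  congr 1; ring

lemma hasDerivAt_stdNormalPDF (t : ℝ) :
    HasDerivAt stdNormalPDF (-(t * stdNormalPDF t)) t := by
  have h : HasDerivAt (fun u : ℝ => -u ^ 2 / 2) (-t) t :=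
    ((hasDerivAt_pow 2 t).neg.div_const 2).congr_deriv (by simp; ring)
  exact (h.exp.div_const _).congr_deriv (by unfold stdNormalPDF; ring)

lemma tendsto_stdNormalPDF_atTop : Tendsto stdNormalPDF atTop (𝓝 0) := by
  have h : Tendsto (fun t : ℝ => -t ^ 2 / 2) atTop atBot :=
    (tendsto_neg_atBot_iff.2 (tendsto_pow_atTop two_ne_zero)).atBot_div_const two_pos
  have h' := (tendsto_exp_atBot.comp h).div_const (√(2 * π))
  rw [zero_div] at h'
  exact h'

lemma integrable_mul_stdNormalPDF : Integrable fun t => t * stdNormalPDF t := by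
  have h := (integrable_mul_exp_neg_mul_sq (by norm_num : (0 : ℝ) < 1 / 2)).div_const
    (√(2 * π))
  refine h.congr (Eventually.of_forall fun t => ?_)
  simp only [stdNormalPDF_eq_exp_neg_mul_sq, mul_div_assoc]

lemma integral_Ioi_mul_stdNormalPDF (y : ℝ) :
    ∫ t in Ioi y, t * stdNormalPDF t = stdNormalPDF y := by
  rw [integral_Ioi_of_hasDerivAt_of_tendsto' (f := fun t => -stdNormalPDF t)
    (fun t _ => (hasDerivAt_stdNormalPDF t).neg.congr_deriv (neg_neg _))
    integrable_mul_stdNormalPDF.integrableOn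
    (by simpa using tendsto_stdNormalPDF_atTop.neg)]
  ring

lemma stdNormalCDF_neg (y : ℝ) : stdNormalCDF (-y) = ∫ t in Ioi y, stdNormalPDF t := by
  rw [stdNormalCDF, ← neg_neg y, ← integral_comp_neg_Iic, neg_neg]
  exact integral_congr_ae (Eventually.of_forall fun t => (stdNormalPDF_neg t).symm)

lemma stdNormalCDF_neg_eq_one_sub (y : ℝ) : stdNormalCDF (-y) = 1 - stdNormalCDF y := by
  rw [stdNormalCDF_neg, eq_sub_iff_add_eq, add_comm, ← integral_stdNormalPDF,
    ← intervalIntegral.integral_Iic_add_Ioi integrable_stdNormalPDF.integrableOn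
    integrable_stdNormalPDF.integrableOn]
  rfl

lemma hasDerivAt_stdNormalCDF (y : ℝ) : HasDerivAt stdNormalCDF (stdNormalPDF y) y := by
  have hsub (z : ℝ) : stdNormalCDF z = stdNormalCDF 0 + ∫ t in (0 : ℝ)..z, stdNormalPDF t := by
    rw [← intervalIntegral.integral_Iic_sub_Iic integrable_stdNormalPDF.integrableOn
      integrable_stdNormalPDF.integrableOn]
    simp only [stdNormalCDF, stdNormalPDF]; ring
  rw [funext hsub]
  exact (intervalIntegral.integral_hasDerivAt_right integrable_stdNormalPDF.intervalIntegrable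
    (continuous_stdNormalPDF.stronglyMeasurableAtFilter _ _)
    continuous_stdNormalPDF.continuousAt).const_add _

lemma stdNormalCDF_strictMono : StrictMono stdNormalCDF :=
  strictMono_of_hasDerivAt_pos hasDerivAt_stdNormalCDF stdNormalPDF_pos

lemma stdNormalCDF_pos (y : ℝ) : 0 < stdNormalCDF y := by
  have hnonneg : 0 ≤ stdNormalCDF (y - 1) :=
    setIntegral_nonneg measurableSet_Iic fun t _ => (stdNormalPDF_pos t).le
  linarith [stdNormalCDF_strictMono (sub_one_lt y)]

lemma stdNormalCDF_neg_le_div {y : ℝ} (hy : 0 < y) :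
    stdNormalCDF (-y) ≤ stdNormalPDF y / y := by
  rw [stdNormalCDF_neg, ← integral_Ioi_mul_stdNormalPDF, ← integral_div]
  refine setIntegral_mono_on integrable_stdNormalPDF.integrableOn
    (integrable_mul_stdNormalPDF.div_const y).integrableOn measurableSet_Ioi fun t ht => ?_
  rw [le_div_iff₀ hy]
  nlinarith [stdNormalPDF_pos t, mem_Ioi.1 ht]

lemma hasDerivAt_stdNormalPDF_mul_inv_sub_inv_cube {t : ℝ} (ht : t ≠ 0) :
    HasDerivAt (fun u => stdNormalPDF u * (1 / u - 1 / u ^ 3))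
      (stdNormalPDF t * (3 / t ^ 4 - 1)) t := by
  have hinv : HasDerivAt (fun u : ℝ => 1 / u - 1 / u ^ 3) (-1 / t ^ 2 + 3 / t ^ 4) t := by
    simp only [one_div]
    exact ((hasDerivAt_inv ht).sub ((hasDerivAt_pow 3 t).inv (pow_ne_zero 3 ht))).congr_deriv
      (by field_simp; ring)
  exact ((hasDerivAt_stdNormalPDF t).mul hinv).congr_deriv (by field_simp; ring)

lemma le_stdNormalCDF_neg {y : ℝ} (hy : 0 < y) :
    stdNormalPDF y * (1 / y - 1 / y ^ 3) ≤ stdNormalCDF (-y) := by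
  have hderiv : ∀ t ∈ Ici y, HasDerivAt (fun u => -(stdNormalPDF u * (1 / u - 1 / u ^ 3)))
      (stdNormalPDF t * (1 - 3 / t ^ 4)) t := fun t ht =>
    (hasDerivAt_stdNormalPDF_mul_inv_sub_inv_cube (hy.trans_le ht).ne').neg.congr_deriv (by ring)
  have hint : IntegrableOn (fun t => stdNormalPDF t * (1 - 3 / t ^ 4)) (Ioi y) := by
    refine Integrable.mono' (integrable_stdNormalPDF.mul_const (1 + 3 / y ^ 4)).integrableOn
      (by fun_prop : Measurable _).aestronglyMeasurable
      (ae_restrict_of_forall_mem measurableSet_Ioi fun t ht => ?_)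
    have ht : y < t := ht
    have hbound : 3 / t ^ 4 ≤ 3 / y ^ 4 := by gcongr
    rw [norm_mul, Real.norm_of_nonneg (stdNormalPDF_pos t).le]
    refine mul_le_mul_of_nonneg_left ((abs_sub _ _).trans ?_) (stdNormalPDF_pos t).le
    rw [abs_one, abs_of_nonneg (by have := hy.trans ht; positivity)]
    linarith
  have hlim : Tendsto (fun u => -(stdNormalPDF u * (1 / u - 1 / u ^ 3))) atTop (𝓝 0) := by
    have hpow : Tendsto (fun u : ℝ => 1 / u - 1 / u ^ 3) atTop (𝓝 0) := by
      have := (tendsto_inv_atTop_zero (𝕜 := ℝ)).sub (tendsto_inv_atTop_zero.comp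
        (tendsto_pow_atTop (by norm_num : 3 ≠ 0)))
      rw [sub_zero] at this
      simpa only [one_div, Function.comp_def] using this
    simpa using (tendsto_stdNormalPDF_atTop.mul hpow).neg
  calc stdNormalPDF y * (1 / y - 1 / y ^ 3)
      = ∫ t in Ioi y, stdNormalPDF t * (1 - 3 / t ^ 4) := by
        rw [integral_Ioi_of_hasDerivAt_of_tendsto' hderiv hint hlim]; ring
    _ ≤ ∫ t in Ioi y, stdNormalPDF t := by
        refine setIntegral_mono_on hint integrable_stdNormalPDF.integrableOn measurableSet_Ioi
          fun t ht => ?_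
        have : 0 ≤ 3 / t ^ 4 := by positivity
        nlinarith [stdNormalPDF_pos t]
    _ = stdNormalCDF (-y) := (stdNormalCDF_neg y).symm

lemma max_sub_zero_eq_sub_add (a b : ℝ) : max (a - b) 0 = a - b + max (b - a) 0 := by
  have := max_zero_sub_eq_self (a - b)
  rw [neg_sub] at this
  linarith

lemma PBS_eq_exp_sub_one_add_CBS (T x σ : ℝ) : PBS T x σ = exp x - 1 + CBS T x σ := by
  unfold PBS CBS
  split_ifs
  · exact max_sub_zero_eq_sub_add _ _
  · rw [stdNormalCDF_neg_eq_one_sub, stdNormalCDF_neg_eq_one_sub]; ring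

lemma dplus_add_neg_dminus (T x σ : ℝ) : dplus T x σ + -dminus T x σ = σ * √T := by
  unfold dplus dminus; ring

lemma neg_dminus_sq {T x σ : ℝ} (h : σ * √T ≠ 0) :
    (-dminus T x σ) ^ 2 = dplus T x σ ^ 2 + 2 * x := by
  obtain ⟨hσ, hT⟩ := mul_ne_zero_iff.1 h
  unfold dplus dminus; field_simp; ring

lemma neg_dminus_pos {T x σ : ℝ} (hT : 0 < T) (hx : 0 < x) (hσ : 0 < σ) :
    0 < -dminus T x σ := by
  have hs : 0 < σ * √T := mul_pos hσ (sqrt_pos.2 hT)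
  have : 0 < x / (σ * √T) := div_pos hx hs
  unfold dminus
  rw [neg_div]
  linarith

lemma CBS_of_ne_zero (T x : ℝ) {σ : ℝ} (hσ : σ ≠ 0) :
    CBS T x σ = stdNormalCDF (dplus T x σ) - exp x * stdNormalCDF (dminus T x σ) :=
  if_neg hσ

lemma CBS_zero_of_nonneg (T : ℝ) {x : ℝ} (hx : 0 ≤ x) : CBS T x 0 = 0 := by
  rw [CBS, if_pos rfl, max_eq_right (by linarith [one_le_exp hx])]

lemma sqrt_mul_sub_wing_expansion {T x : ℝ} (hT : 0 < T) (hx : 0 < x) (σ n : ℝ) :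
    √(2 * T * x) * (σ - √(2 * x / T) - n / √T - n ^ 2 / (2 * √(2 * T * x)))
      = √(2 * x) * (σ * √T) - 2 * x - n * √(2 * x) - n ^ 2 / 2 := by
  rw [show 2 * T * x = T * (2 * x) by ring, sqrt_mul hT.le, sqrt_div' _ hT.le]
  field_simp
  linear_combination (-2) * mul_self_sqrt (by linarith : (0 : ℝ) ≤ 2 * x)

section Payoff

variable {Ω : Type*} [MeasurableSpace Ω] {μ : Measure Ω} {S : Ω → ℝ}

lemma integral_max_sub_zero_eq [IsProbabilityMeasure μ] (hS : Integrable S μ) (K : ℝ) :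
    ∫ ω, max (K - S ω) 0 ∂μ = K - ∫ ω, S ω ∂μ + ∫ ω, max (S ω - K) 0 ∂μ := by
  simp_rw [max_sub_zero_eq_sub_add K]
  have hput : Integrable (fun ω => K - S ω) μ := (integrable_const K).sub hS
  have hcall : Integrable (fun ω => max (S ω - K) 0) μ := (hS.sub (integrable_const K)).pos_part
  rw [integral_add hput hcall, integral_sub (integrable_const K) hS, integral_const,
    probReal_univ, one_smul]

lemma integral_max_sub_zero_le_setIntegral (hS : Integrable S μ) {K : ℝ} (hK : 0 ≤ K) :
    ∫ ω, max (S ω - K) 0 ∂μ ≤ ∫ ω in {ω | K ≤ S ω}, S ω ∂μ := by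
  have hmeas : NullMeasurableSet {ω | K ≤ S ω} μ :=
    nullMeasurableSet_le aemeasurable_const hS.1.aemeasurable
  rw [← integral_indicator₀ hmeas]
  refine integral_mono_of_nonneg (Eventually.of_forall fun ω => le_max_right _ _)
    (hS.indicator₀ hmeas) (Eventually.of_forall fun ω => ?_)
  by_cases h : K ≤ S ω
  · simp only [indicator_of_mem (show ω ∈ {ω | K ≤ S ω} from h)]
    exact max_le (by linarith) (hK.trans h)
  · simp only [indicator_of_notMem (show ω ∉ {ω | K ≤ S ω} from h)]
    exact (max_eq_right (by linarith)).le

lemma CBS_eq_of_PBS_eq [IsProbabilityMeasure μ] (hS : Integrable S μ) {T x σ : ℝ}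
    (h : PBS T x σ = ∫ ω, max (exp x - S ω) 0 ∂μ) :
    CBS T x σ = 1 - ∫ ω, S ω ∂μ + ∫ ω, max (S ω - exp x) 0 ∂μ := by
  rw [PBS_eq_exp_sub_one_add_CBS, integral_max_sub_zero_eq hS] at h
  linarith

lemma tendsto_sqrt_two_mul_mul_integral_max_sub_zero (hS : Integrable S μ)
    (hG : Tendsto (fun x => √x * ∫ ω in {ω | exp x ≤ S ω}, S ω ∂μ) atTop (𝓝 0)) :
    Tendsto (fun x => √(2 * x) * ∫ ω, max (S ω - exp x) 0 ∂μ) atTop (𝓝 0) := by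
  refine tendsto_of_tendsto_of_tendsto_of_le_of_le' tendsto_const_nhds
    (by simpa using hG.const_mul √2)
    (Eventually.of_forall fun x => mul_nonneg (sqrt_nonneg _)
      (integral_nonneg fun ω => le_max_right _ _)) (Eventually.of_forall fun x => ?_)
  rw [sqrt_mul zero_le_two, mul_assoc]
  exact mul_le_mul_of_nonneg_left (mul_le_mul_of_nonneg_left
    (integral_max_sub_zero_le_setIntegral hS (exp_pos x).le) (sqrt_nonneg x)) (sqrt_nonneg 2)

end Payoff

lemma StrictMono.tendsto_of_tendsto_comp {α β γ : Type*} [LinearOrder α] [TopologicalSpace α]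
    [OrderTopology α] [LinearOrder β] [TopologicalSpace β] [OrderTopology β] {f : α → β}
    (hf : StrictMono f) {u : γ → α} {l : Filter γ} {a : α}
    (h : Tendsto (fun x => f (u x)) l (𝓝 (f a))) : Tendsto u l (𝓝 a) := by
  rw [tendsto_order] at h ⊢
  exact ⟨fun b hb => (h.1 _ (hf hb)).mono fun x hx => hf.lt_iff_lt.1 hx,
    fun b hb => (h.2 _ (hf hb)).mono fun x hx => hf.lt_iff_lt.1 hx⟩

section GaussianTail

variable {x y d : ℝ}

lemma exp_mul_stdNormalPDF_of_sq_eq (h : y ^ 2 = d ^ 2 + 2 * x) :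
    exp x * stdNormalPDF y = stdNormalPDF d := by
  unfold stdNormalPDF
  rw [mul_div_assoc', ← exp_add, h]
  ring_nf

lemma exp_mul_stdNormalCDF_neg_le (hy : 0 < y) (h : y ^ 2 = d ^ 2 + 2 * x) :
    exp x * stdNormalCDF (-y) ≤ stdNormalPDF d / y := by
  calc exp x * stdNormalCDF (-y) ≤ exp x * (stdNormalPDF y / y) :=
        mul_le_mul_of_nonneg_left (stdNormalCDF_neg_le_div hy) (exp_pos x).le
    _ = stdNormalPDF d / y := by rw [mul_div_assoc', exp_mul_stdNormalPDF_of_sq_eq h]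

lemma le_exp_mul_stdNormalCDF_neg (hy : 0 < y) (h : y ^ 2 = d ^ 2 + 2 * x) :
    stdNormalPDF d * (1 / y - 1 / y ^ 3) ≤ exp x * stdNormalCDF (-y) := by
  calc stdNormalPDF d * (1 / y - 1 / y ^ 3)
      = exp x * (stdNormalPDF y * (1 / y - 1 / y ^ 3)) := by
        rw [← mul_assoc, exp_mul_stdNormalPDF_of_sq_eq h]
    _ ≤ exp x * stdNormalCDF (-y) :=
        mul_le_mul_of_nonneg_left (le_stdNormalCDF_neg hy) (exp_pos x).le

lemma sqrt_two_mul_le (hy : 0 ≤ y) (h : y ^ 2 = d ^ 2 + 2 * x) : √(2 * x) ≤ y :=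
  (sqrt_le_left hy).2 (by nlinarith [sq_nonneg d])

lemma le_abs_add_sqrt_two_mul (hx : 0 ≤ x) (h : y ^ 2 = d ^ 2 + 2 * x) :
    y ≤ |d| + √(2 * x) := by
  have hs := sq_sqrt (by linarith : 0 ≤ 2 * x)
  nlinarith [sq_abs d, abs_nonneg d, sqrt_nonneg (2 * x)]

lemma tendsto_sqrt_two_mul_atTop : Tendsto (fun x : ℝ => √(2 * x)) atTop atTop :=
  tendsto_sqrt_atTop.comp (tendsto_id.const_mul_atTop two_pos)

end GaussianTail

section Asymptotics

variable {D Y c : ℝ → ℝ} {n : ℝ}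

lemma tendsto_of_stdNormalCDF_eq
    (hY : ∀ᶠ x in atTop, 0 < Y x ∧ Y x ^ 2 = D x ^ 2 + 2 * x) (hc : Tendsto c atTop (𝓝 0))
    (hN : ∀ᶠ x in atTop,
      stdNormalCDF (D x) = stdNormalCDF n + c x + exp x * stdNormalCDF (-Y x)) :
    Tendsto D atTop (𝓝 n) := by
  refine stdNormalCDF_strictMono.tendsto_of_tendsto_comp ?_
  have hlow : Tendsto (fun x => stdNormalCDF n + c x) atTop (𝓝 (stdNormalCDF n)) := by
    simpa using hc.const_add (stdNormalCDF n)
  have hup : Tendsto (fun x => stdNormalCDF n + c x + (√(2 * x))⁻¹) atTop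
      (𝓝 (stdNormalCDF n)) := by
    simpa using (hc.const_add _).add tendsto_sqrt_two_mul_atTop.inv_tendsto_atTop
  refine tendsto_of_tendsto_of_tendsto_of_le_of_le' hlow hup ?_ ?_
  · filter_upwards [hN] with x hx
    rw [hx]
    exact le_add_of_nonneg_right (mul_nonneg (exp_pos x).le (stdNormalCDF_pos _).le)
  · filter_upwards [hN, hY, eventually_gt_atTop 0] with x hx ⟨hYpos, hYsq⟩ hx0
    have hs : 0 < √(2 * x) := sqrt_pos.2 (by linarith)
    rw [hx, add_le_add_iff_left]
    calc exp x * stdNormalCDF (-Y x) ≤ stdNormalPDF (D x) / Y x :=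
          exp_mul_stdNormalCDF_neg_le hYpos hYsq
      _ ≤ 1 / √(2 * x) :=
          div_le_div₀ zero_le_one (stdNormalPDF_le_one _) hs (sqrt_two_mul_le hYpos.le hYsq)
      _ = (√(2 * x))⁻¹ := one_div _

lemma tendsto_div_sqrt_two_mul (hY : ∀ᶠ x in atTop, 0 < Y x ∧ Y x ^ 2 = D x ^ 2 + 2 * x)
    (hD : Tendsto D atTop (𝓝 n)) : Tendsto (fun x => Y x / √(2 * x)) atTop (𝓝 1) := by
  have hup : Tendsto (fun x => 1 + |D x| * (√(2 * x))⁻¹) atTop (𝓝 1) := by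
    simpa using (hD.abs.mul tendsto_sqrt_two_mul_atTop.inv_tendsto_atTop).const_add 1
  refine tendsto_of_tendsto_of_tendsto_of_le_of_le' tendsto_const_nhds hup ?_ ?_
  · filter_upwards [hY, eventually_gt_atTop 0] with x ⟨hYpos, hYsq⟩ hx0
    exact (one_le_div (sqrt_pos.2 (by linarith))).2 (sqrt_two_mul_le hYpos.le hYsq)
  · filter_upwards [hY, eventually_gt_atTop 0] with x ⟨hYpos, hYsq⟩ hx0
    have hs : 0 < √(2 * x) := sqrt_pos.2 (by linarith)
    rw [div_le_iff₀ hs, add_mul, one_mul, mul_assoc, inv_mul_cancel₀ hs.ne', mul_one, add_comm]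
    exact le_abs_add_sqrt_two_mul hx0.le hYsq

lemma tendsto_sqrt_two_mul_mul_exp_mul_stdNormalCDF_neg
    (hY : ∀ᶠ x in atTop, 0 < Y x ∧ Y x ^ 2 = D x ^ 2 + 2 * x) (hD : Tendsto D atTop (𝓝 n)) :
    Tendsto (fun x => √(2 * x) * (exp x * stdNormalCDF (-Y x))) atTop
      (𝓝 (stdNormalPDF n)) := by
  have hq := tendsto_div_sqrt_two_mul hY hD
  have hpdf : Tendsto (fun x => stdNormalPDF (D x)) atTop (𝓝 (stdNormalPDF n)) :=
    (continuous_stdNormalPDF.tendsto n).comp hD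
  have hYtop : Tendsto Y atTop atTop :=
    tendsto_atTop_mono' atTop (hY.mono fun x hx => sqrt_two_mul_le hx.1.le hx.2)
      tendsto_sqrt_two_mul_atTop
  have hup : Tendsto (fun x => stdNormalPDF (D x) / (Y x / √(2 * x))) atTop
      (𝓝 (stdNormalPDF n)) := by
    have h := hpdf.div hq one_ne_zero
    rw [div_one] at h
    exact h
  have hlow : Tendsto (fun x => stdNormalPDF (D x) / (Y x / √(2 * x)) * (1 - (Y x ^ 2)⁻¹))
      atTop (𝓝 (stdNormalPDF n)) := by
    simpa using hup.mul
      (((tendsto_pow_atTop two_ne_zero).comp hYtop).inv_tendsto_atTop.const_sub 1)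
  refine tendsto_of_tendsto_of_tendsto_of_le_of_le' hlow hup ?_ ?_
  · filter_upwards [hY, eventually_gt_atTop 0] with x ⟨hYpos, hYsq⟩ hx0
    have hs : 0 < √(2 * x) := sqrt_pos.2 (by linarith)
    have hbound := mul_le_mul_of_nonneg_left (le_exp_mul_stdNormalCDF_neg hYpos hYsq) hs.le
    convert hbound using 1
    field_simp
  · filter_upwards [hY, eventually_gt_atTop 0] with x ⟨hYpos, hYsq⟩ hx0
    have hs : 0 < √(2 * x) := sqrt_pos.2 (by linarith)
    have hbound := mul_le_mul_of_nonneg_left (exp_mul_stdNormalCDF_neg_le hYpos hYsq) hs.le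
    convert hbound using 1
    field_simp

lemma tendsto_zero_of_tendsto_sqrt_two_mul_mul
    (hcx : Tendsto (fun x => √(2 * x) * c x) atTop (𝓝 0)) : Tendsto c atTop (𝓝 0) := by
  have h := hcx.mul tendsto_sqrt_two_mul_atTop.inv_tendsto_atTop
  rw [zero_mul] at h
  refine h.congr' ?_
  filter_upwards [eventually_gt_atTop 0] with x hx0
  simp only [Pi.inv_apply]
  field_simp

lemma tendsto_sqrt_two_mul_mul_sub_of_stdNormalCDF_eq
    (hY : ∀ᶠ x in atTop, 0 < Y x ∧ Y x ^ 2 = D x ^ 2 + 2 * x) (hc : ∀ᶠ x in atTop, 0 ≤ c x)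
    (hcx : Tendsto (fun x => √(2 * x) * c x) atTop (𝓝 0))
    (hN : ∀ᶠ x in atTop,
      stdNormalCDF (D x) = stdNormalCDF n + c x + exp x * stdNormalCDF (-Y x)) :
    Tendsto (fun x => √(2 * x) * (D x - n)) atTop (𝓝 1) := by
  have hD := tendsto_of_stdNormalCDF_eq hY (tendsto_zero_of_tendsto_sqrt_two_mul_mul hcx) hN
  have hlt : ∀ᶠ x in atTop, n < D x := by
    filter_upwards [hN, hc] with x hx hcx0
    refine stdNormalCDF_strictMono.lt_iff_lt.1 ?_
    rw [hx]
    have := mul_pos (exp_pos x) (stdNormalCDF_pos (-Y x))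
    linarith
  have hslope : Tendsto (fun x => slope stdNormalCDF n (D x)) atTop (𝓝 (stdNormalPDF n)) :=
    (hasDerivAt_iff_tendsto_slope.1 (hasDerivAt_stdNormalCDF n)).comp
      (tendsto_nhdsWithin_iff.2 ⟨hD, hlt.mono fun x hx => hx.ne'⟩)
  have hdiff : Tendsto (fun x => √(2 * x) * (stdNormalCDF (D x) - stdNormalCDF n)) atTop
      (𝓝 (stdNormalPDF n)) := by
    have hsum := hcx.add (tendsto_sqrt_two_mul_mul_exp_mul_stdNormalCDF_neg hY hD)
    rw [zero_add] at hsum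
    refine hsum.congr' ?_
    filter_upwards [hN] with x hx
    rw [hx]; ring
  have hquot := hdiff.div hslope (stdNormalPDF_pos n).ne'
  rw [div_self (stdNormalPDF_pos n).ne'] at hquot
  refine hquot.congr' ?_
  filter_upwards [hlt] with x hx
  have hsub : stdNormalCDF (D x) - stdNormalCDF n ≠ 0 :=
    sub_ne_zero.2 (stdNormalCDF_strictMono hx).ne'
  rw [Pi.div_apply, slope_def_field]
  field_simp [sub_ne_zero.2 hx.ne']

lemma tendsto_sqrt_two_mul_mul_add_sub_of_stdNormalCDF_eq
    (hY : ∀ᶠ x in atTop, 0 < Y x ∧ Y x ^ 2 = D x ^ 2 + 2 * x) (hc : ∀ᶠ x in atTop, 0 ≤ c x)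
    (hcx : Tendsto (fun x => √(2 * x) * c x) atTop (𝓝 0))
    (hN : ∀ᶠ x in atTop,
      stdNormalCDF (D x) = stdNormalCDF n + c x + exp x * stdNormalCDF (-Y x)) :
    Tendsto (fun x => √(2 * x) * (D x + Y x) - 2 * x - n * √(2 * x) - n ^ 2 / 2) atTop
      (𝓝 1) := by
  have hD := tendsto_of_stdNormalCDF_eq hY (tendsto_zero_of_tendsto_sqrt_two_mul_mul hcx) hN
  have hDn := tendsto_sqrt_two_mul_mul_sub_of_stdNormalCDF_eq hY hc hcx hN
  have hq := tendsto_div_sqrt_two_mul hY hD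
  have hlim : Tendsto
      (fun x => √(2 * x) * (D x - n) + D x ^ 2 / (Y x / √(2 * x) + 1) - n ^ 2 / 2) atTop
      (𝓝 (1 + n ^ 2 / (1 + 1) - n ^ 2 / 2)) :=
    ((hDn.add ((hD.pow 2).div (hq.add_const 1) (by norm_num))).sub_const _)
  rw [show (1 : ℝ) + n ^ 2 / (1 + 1) - n ^ 2 / 2 = 1 by ring] at hlim
  refine hlim.congr' ?_
  filter_upwards [hY, eventually_gt_atTop 0] with x ⟨hYpos, hYsq⟩ hx0
  have hs : 0 < √(2 * x) := sqrt_pos.2 (by linarith)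
  have hs2 : √(2 * x) ^ 2 = 2 * x := sq_sqrt (by linarith)
  field_simp
  linear_combination (-2 * √(2 * x)) * hYsq - 2 * Y x * hs2

end Asymptotics

theorem iv_right_wing_higher_order_o_general
    {Ω : Type*} [MeasurableSpace Ω] (μ : Measure Ω) [IsProbabilityMeasure μ]
    (S : Ω → ℝ) (hSint : Integrable S μ)
    (m : ℝ) (hm : m = 1 - ∫ ω, S ω ∂μ)
    (T : ℝ) (hT : 0 < T) (n : ℝ) (hn : stdNormalCDF n = m)
    (hG : Tendsto
      (fun x => Real.sqrt x * ∫ ω in {ω | Real.exp x ≤ S ω}, S ω ∂μ) atTop (nhds 0))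
    (I : ℝ → ℝ) (hInonneg : ∀ x, 0 ≤ I x)
    (hI : ∀ x : ℝ, PBS T x (I x) = ∫ ω, max (Real.exp x - S ω) 0 ∂μ)
    (Ψ : ℝ → ℝ)
    (hΨ : ∀ x : ℝ, Ψ x = Real.sqrt (2 * T * x) * Real.exp (-n ^ 2 / 2) *
      (I x - Real.sqrt (2 * x / T) - n / Real.sqrt T
        - n ^ 2 / (2 * Real.sqrt (2 * T * x)))) :
    0 ≤ limsup Ψ atTop ∧ limsup Ψ atTop ≤ 1 := by
  set c : ℝ → ℝ := fun x => ∫ ω, max (S ω - exp x) 0 ∂μ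
  have hc (x : ℝ) : 0 ≤ c x := integral_nonneg fun ω => le_max_right _ _
  have hCBS (x : ℝ) : CBS T x (I x) = m + c x := hm ▸ CBS_eq_of_PBS_eq hSint (hI x)
  have hIpos (x : ℝ) (hx : 0 < x) : 0 < I x := by
    refine (hInonneg x).lt_of_ne fun h0 => ?_
    have h := hCBS x
    rw [← h0, CBS_zero_of_nonneg T hx.le] at h
    linarith [hc x, stdNormalCDF_pos n]
  set D : ℝ → ℝ := fun x => dplus T x (I x)
  set Y : ℝ → ℝ := fun x => -dminus T x (I x)
  have hY : ∀ᶠ x in atTop, 0 < Y x ∧ Y x ^ 2 = D x ^ 2 + 2 * x :=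
    (eventually_gt_atTop 0).mono fun x hx => ⟨neg_dminus_pos hT hx (hIpos x hx),
      neg_dminus_sq (mul_pos (hIpos x hx) (sqrt_pos.2 hT)).ne'⟩
  have hN : ∀ᶠ x in atTop,
      stdNormalCDF (D x) = stdNormalCDF n + c x + exp x * stdNormalCDF (-Y x) := by
    filter_upwards [eventually_gt_atTop 0] with x hx
    have h := hCBS x
    rw [CBS_of_ne_zero T x (hIpos x hx).ne'] at h
    simp only [Y, neg_neg]
    linarith
  have hlim := (tendsto_sqrt_two_mul_mul_add_sub_of_stdNormalCDF_eq hY (Eventually.of_forall hc)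
    (tendsto_sqrt_two_mul_mul_integral_max_sub_zero hSint hG) hN).const_mul (exp (-n ^ 2 / 2))
  rw [mul_one] at hlim
  have hΨlim : Tendsto Ψ atTop (𝓝 (exp (-n ^ 2 / 2))) := by
    refine hlim.congr' ((eventually_gt_atTop 0).mono fun x hx => ?_)
    rw [hΨ x, mul_right_comm, sqrt_mul_sub_wing_expansion hT hx, ← dplus_add_neg_dminus T x (I x), mul_comm]
  rw [hΨlim.limsup_eq]
  exact ⟨(exp_pos _).le, exp_le_one_iff.2 (by linarith [sq_nonneg n])⟩

/-- higher-order right-wing expansion of the Put-implied volatility under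
the tail condition `√x · G(x) → 0`, where `G(x) = E[S·1_{S ≥ eˣ}]`. -/
theorem iv_right_wing_higher_order_o
    {Ω : Type*} [MeasurableSpace Ω] (μ : Measure Ω) [IsProbabilityMeasure μ]
    (S : Ω → ℝ) (hSpos : ∀ᵐ ω ∂μ, 0 < S ω) (hSint : Integrable S μ)
    (m : ℝ) (hm : m = 1 - ∫ ω, S ω ∂μ) (hm0 : 0 < m) (hm1 : m < 1)
    (T : ℝ) (hT : 0 < T) (n : ℝ) (hn : stdNormalCDF n = m)
    (hG : Tendsto
      (fun x => Real.sqrt x * ∫ ω in {ω | Real.exp x ≤ S ω}, S ω ∂μ) atTop (nhds 0))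
    (I : ℝ → ℝ) (hInonneg : ∀ x, 0 ≤ I x)
    (hI : ∀ x : ℝ, PBS T x (I x) = ∫ ω, max (Real.exp x - S ω) 0 ∂μ)
    (Ψ : ℝ → ℝ)
    (hΨ : ∀ x : ℝ, Ψ x = Real.sqrt (2 * T * x) * Real.exp (-n ^ 2 / 2) *
      (I x - Real.sqrt (2 * x / T) - n / Real.sqrt T
        - n ^ 2 / (2 * Real.sqrt (2 * T * x)))) :
    0 ≤ limsup Ψ atTop ∧ limsup Ψ atTop ≤ 1 :=
  iv_right_wing_higher_order_o_general μ S hSint m hm T hT n hn hG I hInonneg hI Ψ hΨ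
end
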